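/- arXiv:2311.12244 — 4 statements merged into one kernel-verified Lean document; each statement's English description precedes it below -/
import Mathlib

section
/- Let (S, A, O, H, ρ0, P, Ω, r) be a finite POMDP that is L-decodable (L ≥ 1), let π be an L-step policy, and let h satisfy L−1 ≤ h ≤ H. If τ_h and τ_h' are admissible histories of length h having the same L-step window, then Q_h^π(τ_h, a) = Q_h^π(τ_h', a) for every action a ∈ A, and V_h^π(τ_h) = V_h^π(τ_h'). That is, for L-step policies in an L-decodable POMDP, the action-value and value functions depend on the history only through its L-step window. -/
open Finset

/-- A probability distribution on a finite type, given by a real-valued mass function. -/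
structure FDist (α : Type) [Fintype α] : Type where
  prob : α → ℝ
  nonneg : ∀ a, 0 ≤ prob a
  sum_one : ∑ a, prob a = 1

/-- A finite POMDP `(S, A, O, H, ρ0, P, Ω, r)`: finite state, action and observation spaces,
horizon `H`, initial state distribution `ρ0`, transition kernel `P`, emission kernel `emit`
(denoted Ω in the text), and reward `r`. -/
structure POMDP (S A O : Type) [Fintype S] [Fintype A] [Fintype O] : Type where
  H : ℕ
  ρ0 : FDist S
  P : S → A → FDist S
  emit : S → FDist O
  r : O → A → ℝ

/-- A history of length `h`: observations `o_0, …, o_h` and actions `a_0, …, a_{h-1}`. -/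
abbrev Hist (O A : Type) (h : ℕ) : Type := (Fin (h + 1) → O) × (Fin h → A)

/-- A (history-dependent) policy: at each step `h` and history `τ_h`, a distribution on actions. -/
abbrev Policy (O A : Type) [Fintype A] : Type := (h : ℕ) → Hist O A h → FDist A

/-- The `L`-step window space `X = (O × A)^(L-1) × O`. -/
abbrev Window (O A : Type) (L : ℕ) : Type := (Fin (L - 1) → O × A) × O

section POMDPDefs

variable {S A O : Type} [Fintype S] [Fintype A] [Fintype O]

/-- The history of length `h` read off from a full trajectory of observations and actions. -/
def Hist.take (H : ℕ) {h : ℕ} (hh : h ≤ H) (o : Fin (H + 1) → O) (a : Fin (H + 1) → A) :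
    Hist O A h :=
  (fun i => o (Fin.castLE (by omega) i), fun i => a (Fin.castLE (by omega) i))

/-- The `L`-step window `x_h = (o_{h-L+1}, a_{h-L+1}, …, a_{h-1}, o_h)` of a history of
length `h` (for `L - 1 ≤ h`). -/
def Hist.window (L : ℕ) {h : ℕ} (hL : L - 1 ≤ h) (τ : Hist O A h) : Window O A L :=
  (fun i =>
      (τ.1 ⟨h + 1 - L + i.val, by have := i.isLt; omega⟩,
       τ.2 ⟨h + 1 - L + i.val, by have := i.isLt; omega⟩),
    τ.1 (Fin.last h))

/-- The history `τ_h` extended by the action `a`, then alternately by the observations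
`ω 0, …, ω (k-1)` (playing the roles of `o_{h+1}, …, o_{h+k}`) and the actions
`α 0, …, α (k-2)` (playing the roles of `a_{h+1}, …, a_{h+k-1}`). -/
def Hist.extend {h : ℕ} (τ : Hist O A h) (a : A) {m : ℕ} (ω : Fin m → O) (α : Fin m → A)
    (k : ℕ) (hk : k ≤ m) : Hist O A (h + k) :=
  (fun i =>
      if hi : i.val ≤ h then τ.1 ⟨i.val, by omega⟩
      else ω ⟨i.val - h - 1, by have := i.isLt; omega⟩,
    fun i =>
      if hi : i.val < h then τ.2 ⟨i.val, by omega⟩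
      else if hi' : i.val = h then a
      else α ⟨i.val - h - 1, by have := i.isLt; omega⟩)

/-- The history `τ_h` extended by one action `a` and one observation `o'`. -/
def Hist.snoc {h : ℕ} (τ : Hist O A h) (a : A) (o' : O) : Hist O A (h + 1) :=
  (fun i => if hi : i.val ≤ h then τ.1 ⟨i.val, by omega⟩ else o',
    fun i => if hi : i.val < h then τ.2 ⟨i.val, by omega⟩ else a)

/-- The probability assigned by the trajectory distribution of the policy `π` to the full
trajectory `(s_0, o_0, a_0, …, s_H, o_H, a_H)`:
`s_0 ∼ ρ0`, `o_t ∼ Ω(s_t)`, `a_t ∼ π_t(τ_t)`, `s_{t+1} ∼ P(s_t, a_t)`. -/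
noncomputable def trajProb (M : POMDP S A O) (π : Policy O A)
    (s : Fin (M.H + 1) → S) (o : Fin (M.H + 1) → O) (a : Fin (M.H + 1) → A) : ℝ :=
  M.ρ0.prob (s 0)
    * ∏ t : Fin (M.H + 1), (M.emit (s t)).prob (o t)
    * ∏ t : Fin (M.H + 1),
        (π t.val (Hist.take M.H (Nat.lt_succ_iff.mp t.isLt) o a)).prob (a t)
    * ∏ t : Fin M.H, (M.P (s t.castSucc) (a t.castSucc)).prob (s t.succ)

variable [DecidableEq S] [DecidableEq A] [DecidableEq O]

/-- The probability that the history at step `h` equals `τ`, under the trajectory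
distribution of `π`. -/
noncomputable def histProb (M : POMDP S A O) (π : Policy O A) {h : ℕ} (hh : h ≤ M.H)
    (τ : Hist O A h) : ℝ :=
  ∑ s : Fin (M.H + 1) → S, ∑ o : Fin (M.H + 1) → O, ∑ a : Fin (M.H + 1) → A,
    if Hist.take M.H hh o a = τ then trajProb M π s o a else 0

/-- The probability that the history at step `h` equals `τ` and `s_h = s0`, under the
trajectory distribution of `π`. -/
noncomputable def stateHistProb (M : POMDP S A O) (π : Policy O A) {h : ℕ} (hh : h ≤ M.H)
    (τ : Hist O A h) (s0 : S) : ℝ :=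
  ∑ s : Fin (M.H + 1) → S, ∑ o : Fin (M.H + 1) → O, ∑ a : Fin (M.H + 1) → A,
    if Hist.take M.H hh o a = τ ∧ s ⟨h, by omega⟩ = s0 then trajProb M π s o a else 0

variable [Nonempty A]

/-- The uniform distribution on a finite nonempty type. -/
noncomputable def uniformDist (A : Type) [Fintype A] [Nonempty A] : FDist A where
  prob _ := (Fintype.card A : ℝ)⁻¹
  nonneg _ := by positivity
  sum_one := by
    have h : (Fintype.card A : ℝ) ≠ 0 := Nat.cast_ne_zero.mpr Fintype.card_ne_zero
    simp [Finset.sum_const, Finset.card_univ, nsmul_eq_mul, h]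

/-- The uniformly random policy. -/
noncomputable def uniformPolicy (O A : Type) [Fintype A] [Nonempty A] : Policy O A :=
  fun _ _ => uniformDist A

/-- A history is admissible if it has positive probability under the uniformly random policy. -/
def Admissible (M : POMDP S A O) {h : ℕ} (hh : h ≤ M.H) (τ : Hist O A h) : Prop :=
  0 < histProb M (uniformPolicy O A) hh τ

/-- The belief `b(τ_h)(s)`: the conditional probability of `s_h = s` given that the history
equals `τ_h`, under the trajectory distribution of the uniformly random policy. -/
noncomputable def belief (M : POMDP S A O) {h : ℕ} (hh : h ≤ M.H) (τ : Hist O A h)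
    (s0 : S) : ℝ :=
  stateHistProb M (uniformPolicy O A) hh τ s0 / histProb M (uniformPolicy O A) hh τ

/-- An outcome of the continuation process from step `h` with `m = H - h` remaining steps:
states `s_h, …, s_H`, observations `o_{h+1}, …, o_H` and actions `a_{h+1}, …, a_H`. -/
abbrev ContOutcome (S O A : Type) (m : ℕ) : Type :=
  (Fin (m + 1) → S) × (Fin m → O) × (Fin m → A)

/-- The probability assigned to the outcome `c` by the continuation process from `(τ, a)`:
`s_h ∼ b(τ)`, `a_h = a`, and for `h < t ≤ H`: `s_t ∼ P(s_{t-1}, a_{t-1})`, `o_t ∼ Ω(s_t)`,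
`a_t ∼ π_t(τ_t)` where `τ_t` is `τ` extended by `(a, o_{h+1}, a_{h+1}, …, o_t)`. -/
noncomputable def contProb (M : POMDP S A O) (π : Policy O A) {h : ℕ} (hh : h ≤ M.H)
    (τ : Hist O A h) (a : A) (c : ContOutcome S O A (M.H - h)) : ℝ :=
  belief M hh τ (c.1 0)
    * ∏ t : Fin (M.H - h),
        ((M.P (c.1 t.castSucc)
              (if ht : t.val = 0 then a
               else c.2.2 ⟨t.val - 1, by have := t.isLt; omega⟩)).prob (c.1 t.succ)
          * (M.emit (c.1 t.succ)).prob (c.2.1 t)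
          * (π (h + t.val + 1)
              (Hist.extend τ a c.2.1 c.2.2 (t.val + 1)
                (by have := t.isLt; omega))).prob (c.2.2 t))

/-- The action-value `Q_h^π(τ_h, a)`: the expectation of `Σ_{t=h}^{H} r(o_t, a_t)` under the
continuation process from `(τ_h, a)`. -/
noncomputable def Qval (M : POMDP S A O) (π : Policy O A) {h : ℕ} (hh : h ≤ M.H)
    (τ : Hist O A h) (a : A) : ℝ :=
  ∑ c : ContOutcome S O A (M.H - h),
    contProb M π hh τ a c *
      (M.r (τ.1 (Fin.last h)) a + ∑ t : Fin (M.H - h), M.r (c.2.1 t) (c.2.2 t))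

/-- The value `V_h^π(τ_h) = Σ_a π_h(τ_h)(a) · Q_h^π(τ_h, a)`. -/
noncomputable def Vval (M : POMDP S A O) (π : Policy O A) {h : ℕ} (hh : h ≤ M.H)
    (τ : Hist O A h) : ℝ :=
  ∑ a : A, (π h τ).prob a * Qval M π hh τ a

/-- The POMDP `M` is `L`-decodable with decoder `pstar` if the belief of every admissible
history of length `h` with `L - 1 ≤ h ≤ H` equals `pstar` applied to its `L`-step window. -/
def IsDecodable (M : POMDP S A O) (L : ℕ) (pstar : Window O A L → FDist S) : Prop :=
  ∀ (h : ℕ) (hh : h ≤ M.H) (hL : L - 1 ≤ h) (τ : Hist O A h),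
    Admissible M hh τ → ∀ s : S, belief M hh τ s = (pstar (Hist.window L hL τ)).prob s

/-- `π` is an `L`-step policy: for `L - 1 ≤ h ≤ H`, `π_h(τ_h)` depends on `τ_h` only
through its `L`-step window. -/
def IsLStepPolicy (M : POMDP S A O) (L : ℕ) (π : Policy O A) : Prop :=
  ∀ (h : ℕ), h ≤ M.H → ∀ (hL : L - 1 ≤ h) (τ τ' : Hist O A h),
    Hist.window L hL τ = Hist.window L hL τ' → π h τ = π h τ'

end POMDPDefs

theorem hist_comp_eq {O A : Type} {L h : ℕ} (hL1 : 1 ≤ L) (hL : L - 1 ≤ h)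
    {τ τ' : Hist O A h} (hwin : Hist.window L hL τ = Hist.window L hL τ') :
    (∀ j (hj : j ≤ h), h + 1 - L ≤ j →
        τ.1 ⟨j, by omega⟩ = τ'.1 ⟨j, by omega⟩) ∧
    (∀ j (hj : j < h), h + 1 - L ≤ j → τ.2 ⟨j, hj⟩ = τ'.2 ⟨j, hj⟩) := by
  have h1 := congrArg Prod.fst hwin
  have h2 := congrArg Prod.snd hwin
  simp only [Hist.window] at h1 h2
  constructor
  · intro j hj hj'
    rcases eq_or_lt_of_le hj with rfl | hlt
    · have : (⟨j, by omega⟩ : Fin (j + 1)) = Fin.last j := by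
        ext; simp [Fin.last]
      rw [this]; exact h2
    · have hi : j - (h + 1 - L) < L - 1 := by omega
      have h3 := congrArg Prod.fst (congrFun h1 ⟨j - (h + 1 - L), hi⟩)
      simp only at h3
      convert h3 using 3 <;> omega
  · intro j hj hj'
    have hi : j - (h + 1 - L) < L - 1 := by omega
    have h3 := congrArg Prod.snd (congrFun h1 ⟨j - (h + 1 - L), hi⟩)
    simp only at h3
    convert h3 using 3 <;> omega

theorem window_extend_eq {O A : Type} {L h m : ℕ} (hL1 : 1 ≤ L) (hL : L - 1 ≤ h)
    {τ τ' : Hist O A h} (hwin : Hist.window L hL τ = Hist.window L hL τ')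
    (a : A) (ω : Fin m → O) (α : Fin m → A) (k : ℕ) (hk : k ≤ m) (hL' : L - 1 ≤ h + k) :
    Hist.window L hL' (Hist.extend τ a ω α k hk) =
      Hist.window L hL' (Hist.extend τ' a ω α k hk) := by
  obtain ⟨hobs, hact⟩ := hist_comp_eq hL1 hL hwin
  unfold Hist.window Hist.extend
  refine Prod.ext ?_ ?_
  · funext i
    have hi := i.isLt
    refine Prod.ext ?_ ?_ <;> simp only
    · split_ifs with hle
      · exact hobs _ hle (by omega)
      · rfl
    · split_ifs with hlt heq
      · exact hact _ hlt (by omega)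
      · rfl
      · rfl
  · simp only [Fin.last]
    split_ifs with hle
    · exact hobs _ hle (by omega)
    · rfl

/-- In an `L`-decodable finite POMDP, for an `L`-step policy `π` and a step
`h` with `L-1 ≤ h ≤ H`: if two admissible histories of length `h` have the same `L`-step
window, then they have the same action-value `Q_h^π(·, a)` for every action `a`, and the
same value `V_h^π`. -/
theorem statement6
    {S A O : Type} [Fintype S] [Fintype A] [Fintype O]
    [Nonempty S] [Nonempty A] [Nonempty O]
    [DecidableEq S] [DecidableEq A] [DecidableEq O]
    (M : POMDP S A O) (L : ℕ) (hL1 : 1 ≤ L)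
    (hdec : ∃ pstar : Window O A L → FDist S, IsDecodable M L pstar)
    (π : Policy O A) (hπ : IsLStepPolicy M L π)
    (h : ℕ) (hL : L - 1 ≤ h) (hh : h ≤ M.H)
    (τ τ' : Hist O A h) (hτ : Admissible M hh τ) (hτ' : Admissible M hh τ')
    (hwin : Hist.window L hL τ = Hist.window L hL τ') :
    (∀ a : A, Qval M π hh τ a = Qval M π hh τ' a) ∧
      Vval M π hh τ = Vval M π hh τ' := by
  obtain ⟨pstar, hdec⟩ := hdec
  have hb : ∀ s, belief M hh τ s = belief M hh τ' s := fun s => by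
    rw [hdec h hh hL τ hτ s, hdec h hh hL τ' hτ' s, hwin]
  have hlast : τ.1 (Fin.last h) = τ'.1 (Fin.last h) := congrArg Prod.snd hwin
  have hc : ∀ (a : A) (c : ContOutcome S O A (M.H - h)),
      contProb M π hh τ a c = contProb M π hh τ' a c := by
    intro a c
    unfold contProb
    rw [hb]
    congr 1
    refine Finset.prod_congr rfl fun t _ => ?_
    have ht := t.isLt
    have hπt : π (h + t.val + 1)
          (Hist.extend τ a c.2.1 c.2.2 (t.val + 1) (by omega)) =
        π (h + t.val + 1)
          (Hist.extend τ' a c.2.1 c.2.2 (t.val + 1) (by omega)) :=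
      hπ _ (by omega) (by omega) _ _
        (window_extend_eq hL1 hL hwin a _ _ _ _ (by omega))
    rw [hπt]
  have hQ : ∀ a, Qval M π hh τ a = Qval M π hh τ' a := by
    intro a
    unfold Qval
    rw [hlast]
    exact Finset.sum_congr rfl fun c _ => by rw [hc a c]
  have hpol : π h τ = π h τ' := hπ h hh hL τ τ' hwin
  refine ⟨hQ, ?_⟩
  unfold Vval
  rw [hpol]
  exact Finset.sum_congr rfl fun a _ => by rw [hQ a]
end

section
/- For any finite-horizon MDP data (S, A, H, ρ0), any two families of transition kernels P = (P_h) and P' = (P'_h), any rewards r = (r_h) and bonuses b = (b_h) with b_h : S × A → ℝ, and any Markov policy π: V_{P',r+b}^π − V_{P,r}^π = Σ_{h=0}^{H−1} Σ_{(s,a)∈S×A} d_{P,h}^π(s,a)·[ b_h(s,a) + Σ_{s'∈S} (P'_h(s,a)(s') − P_h(s,a)(s'))·V_{P',r+b,h+1}^π(s') ]. -/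
open Finset

section MDP

variable {S A : Type} [Fintype S] [Fintype A]

/-- The value function `V_{P,r,h}^π(s)` of a finite-horizon MDP, defined backwards:
`V_H = 0` and `V_h(s) = Σ_a π_h(s)(a)·(r_h(s,a) + Σ_{s'} P_h(s,a)(s')·V_{h+1}(s'))`. -/
noncomputable def Vstep (H : ℕ) (P : ℕ → S → A → FDist S) (r : ℕ → S → A → ℝ)
    (π : ℕ → S → FDist A) (h : ℕ) (s : S) : ℝ :=
  if hlt : h < H then
    ∑ a : A, (π h s).prob a *
      (r h s a + ∑ s' : S, (P h s a).prob s' * Vstep H P r π (h + 1) s')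
  else 0
termination_by H - h
decreasing_by omega

/-- The total value `V_{P,r}^π = Σ_s ρ0(s)·V_{P,r,0}^π(s)`. -/
noncomputable def Vtot (H : ℕ) (ρ0 : FDist S) (P : ℕ → S → A → FDist S)
    (r : ℕ → S → A → ℝ) (π : ℕ → S → FDist A) : ℝ :=
  ∑ s : S, ρ0.prob s * Vstep H P r π 0 s

/-- The occupancy measure `d_{P,h}^π(s,a)`, defined forwards:
`d_0(s,a) = ρ0(s)·π_0(s)(a)` and
`d_{h+1}(s',a') = (Σ_{s,a} d_h(s,a)·P_h(s,a)(s'))·π_{h+1}(s')(a')`. -/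
noncomputable def docc (ρ0 : FDist S) (P : ℕ → S → A → FDist S) (π : ℕ → S → FDist A) :
    ℕ → S → A → ℝ
  | 0 => fun s a => ρ0.prob s * (π 0 s).prob a
  | (h + 1) => fun s' a' =>
      (∑ s : S, ∑ a : A, docc ρ0 P π h s a * (P h s a).prob s') * (π (h + 1) s').prob a'

end MDP

section Aux

variable {S A : Type} [Fintype S] [Fintype A]

lemma docc_eq (ρ0 : FDist S) (P : ℕ → S → A → FDist S) (π : ℕ → S → FDist A)
    (h : ℕ) (s : S) (a : A) :
    docc ρ0 P π h s a = (∑ a', docc ρ0 P π h s a') * (π h s).prob a := by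
  cases h with
  | zero =>
      simp only [docc]
      rw [← Finset.mul_sum, (π 0 s).sum_one, mul_one]
  | succ n =>
      simp only [docc]
      rw [← Finset.mul_sum, (π (n+1) s).sum_one, mul_one]

lemma Vstep_end (H : ℕ) (P : ℕ → S → A → FDist S) (r : ℕ → S → A → ℝ)
    (π : ℕ → S → FDist A) (s : S) : Vstep H P r π H s = 0 := by
  rw [Vstep]; simp

lemma sim_key (H : ℕ) (ρ0 : FDist S) (P P' : ℕ → S → A → FDist S)
    (r b : ℕ → S → A → ℝ) (π : ℕ → S → FDist A) :
    ∀ n h, h + n = H →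
      ∑ s : S, (∑ a : A, docc ρ0 P π h s a) *
          (Vstep H P' (fun h s a => r h s a + b h s a) π h s - Vstep H P r π h s) =
        ∑ k ∈ Finset.Ico h H, ∑ s : S, ∑ a : A,
          docc ρ0 P π k s a *
            (b k s a + ∑ s' : S, ((P' k s a).prob s' - (P k s a).prob s') *
              Vstep H P' (fun h s a => r h s a + b h s a) π (k + 1) s') := by
  set r' : ℕ → S → A → ℝ := fun h s a => r h s a + b h s a with hr'
  intro n
  induction n with
  | zero =>
      intro h hh
      have : h = H := by omega
      subst this
      simp [Vstep_end, Finset.Ico_self]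
  | succ n ih =>
      intro h hh
      have hlt : h < H := by omega
      have ihh := ih (h + 1) (by omega)
      rw [Finset.sum_eq_sum_Ico_succ_bot hlt]
      have hV : ∀ s : S, Vstep H P' r' π h s - Vstep H P r π h s =
          ∑ a : A, (π h s).prob a *
            ((b h s a + ∑ s' : S, ((P' h s a).prob s' - (P h s a).prob s') *
                Vstep H P' r' π (h + 1) s') +
             ∑ s' : S, (P h s a).prob s' *
                (Vstep H P' r' π (h + 1) s' - Vstep H P r π (h + 1) s')) := by
        intro s
        rw [Vstep, Vstep, dif_pos hlt, dif_pos hlt, ← Finset.sum_sub_distrib]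
        refine Finset.sum_congr rfl fun a _ => ?_
        have e1 : ∑ s' : S, ((P' h s a).prob s' - (P h s a).prob s') *
            Vstep H P' r' π (h + 1) s' =
            (∑ s' : S, (P' h s a).prob s' * Vstep H P' r' π (h + 1) s') -
            ∑ s' : S, (P h s a).prob s' * Vstep H P' r' π (h + 1) s' := by
          rw [← Finset.sum_sub_distrib]
          exact Finset.sum_congr rfl fun s' _ => by ring
        have e2 : ∑ s' : S, (P h s a).prob s' *
            (Vstep H P' r' π (h + 1) s' - Vstep H P r π (h + 1) s') =
            (∑ s' : S, (P h s a).prob s' * Vstep H P' r' π (h + 1) s') -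
            ∑ s' : S, (P h s a).prob s' * Vstep H P r π (h + 1) s' := by
          rw [← Finset.sum_sub_distrib]
          exact Finset.sum_congr rfl fun s' _ => by ring
        rw [e1, e2]
        simp only [hr']
        ring
      calc
        ∑ s : S, (∑ a : A, docc ρ0 P π h s a) *
            (Vstep H P' r' π h s - Vstep H P r π h s)
            = ∑ s : S, ∑ a : A, docc ρ0 P π h s a *
              ((b h s a + ∑ s' : S, ((P' h s a).prob s' - (P h s a).prob s') *
                  Vstep H P' r' π (h + 1) s') +
               ∑ s' : S, (P h s a).prob s' *
                  (Vstep H P' r' π (h + 1) s' - Vstep H P r π (h + 1) s')) := by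
            refine Finset.sum_congr rfl fun s _ => ?_
            rw [hV s, Finset.mul_sum]
            refine Finset.sum_congr rfl fun a _ => ?_
            rw [docc_eq]; ring
        _ = (∑ s : S, ∑ a : A, docc ρ0 P π h s a *
              (b h s a + ∑ s' : S, ((P' h s a).prob s' - (P h s a).prob s') *
                  Vstep H P' r' π (h + 1) s')) +
            ∑ s : S, ∑ a : A, docc ρ0 P π h s a *
              ∑ s' : S, (P h s a).prob s' *
                (Vstep H P' r' π (h + 1) s' - Vstep H P r π (h + 1) s') := by
            rw [← Finset.sum_add_distrib]
            refine Finset.sum_congr rfl fun s _ => ?_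
            rw [← Finset.sum_add_distrib]
            exact Finset.sum_congr rfl fun a _ => by ring
        _ = (∑ s : S, ∑ a : A, docc ρ0 P π h s a *
              (b h s a + ∑ s' : S, ((P' h s a).prob s' - (P h s a).prob s') *
                  Vstep H P' r' π (h + 1) s')) +
            ∑ s' : S, (∑ a' : A, docc ρ0 P π (h + 1) s' a') *
              (Vstep H P' r' π (h + 1) s' - Vstep H P r π (h + 1) s') := by
            congr 1
            have : ∀ s' : S, (∑ a' : A, docc ρ0 P π (h + 1) s' a') =
                ∑ s : S, ∑ a : A, docc ρ0 P π h s a * (P h s a).prob s' := by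
              intro s'
              simp only [docc]
              rw [← Finset.mul_sum, (π (h+1) s').sum_one, mul_one]
            calc ∑ s : S, ∑ a : A, docc ρ0 P π h s a *
                  ∑ s' : S, (P h s a).prob s' *
                    (Vstep H P' r' π (h + 1) s' - Vstep H P r π (h + 1) s')
                = ∑ s : S, ∑ a : A, ∑ s' : S,
                    docc ρ0 P π h s a * (P h s a).prob s' *
                    (Vstep H P' r' π (h + 1) s' - Vstep H P r π (h + 1) s') := by
                  refine Finset.sum_congr rfl fun s _ => Finset.sum_congr rfl fun a _ => ?_
                  rw [Finset.mul_sum]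
                  exact Finset.sum_congr rfl fun s' _ => by ring
              _ = ∑ s' : S, (∑ s : S, ∑ a : A, docc ρ0 P π h s a * (P h s a).prob s') *
                    (Vstep H P' r' π (h + 1) s' - Vstep H P r π (h + 1) s') := by
                  rw [show (∑ s : S, ∑ a : A, ∑ s' : S,
                      docc ρ0 P π h s a * (P h s a).prob s' *
                      (Vstep H P' r' π (h + 1) s' - Vstep H P r π (h + 1) s'))
                      = ∑ s' : S, ∑ s : S, ∑ a : A,
                      docc ρ0 P π h s a * (P h s a).prob s' *
                      (Vstep H P' r' π (h + 1) s' - Vstep H P r π (h + 1) s') from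
                    (Finset.sum_congr rfl fun s _ => Finset.sum_comm).trans
                      Finset.sum_comm]
                  refine Finset.sum_congr rfl fun s' _ => ?_
                  rw [Finset.sum_mul]
                  exact Finset.sum_congr rfl fun s _ => (Finset.sum_mul ..).symm
              _ = _ := by
                  refine Finset.sum_congr rfl fun s' _ => ?_
                  rw [this s']
        _ = _ := by rw [ihh]

end Aux

/-- (Simulation lemma, first form.) For any two families of transition
kernels `P, P'`, rewards `r`, bonuses `b` and Markov policy `π`:
`V_{P',r+b}^π − V_{P,r}^π = Σ_{h<H} Σ_{s,a} d_{P,h}^π(s,a)·(b_h(s,a) +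
Σ_{s'} (P'_h(s,a)(s') − P_h(s,a)(s'))·V_{P',r+b,h+1}^π(s'))`. -/
theorem statement14
    {S A : Type} [Fintype S] [Fintype A] [Nonempty S] [Nonempty A]
    (H : ℕ) (hH : 1 ≤ H) (ρ0 : FDist S)
    (P P' : ℕ → S → A → FDist S)
    (r b : ℕ → S → A → ℝ)
    (π : ℕ → S → FDist A) :
    Vtot H ρ0 P' (fun h s a => r h s a + b h s a) π - Vtot H ρ0 P r π =
      ∑ h ∈ Finset.range H, ∑ s : S, ∑ a : A,
        docc ρ0 P π h s a *
          (b h s a +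
            ∑ s' : S, ((P' h s a).prob s' - (P h s a).prob s') *
              Vstep H P' (fun h s a => r h s a + b h s a) π (h + 1) s') := by
  have key := sim_key H ρ0 P P' r b π H 0 (by omega)
  have h0 : ∀ s : S, (∑ a : A, docc ρ0 P π 0 s a) = ρ0.prob s := by
    intro s
    simp only [docc]
    rw [← Finset.mul_sum, (π 0 s).sum_one, mul_one]
  simp only [h0] at key
  rw [← Finset.range_eq_Ico] at key
  rw [← key, Vtot, Vtot, ← Finset.sum_sub_distrib]
  exact Finset.sum_congr rfl fun s _ => by ring
end

section
/- For any finite-horizon MDP data (S, A, H, ρ0), any two families of transition kernels P = (P_h) and P' = (P'_h), any rewards r = (r_h) and bonuses b = (b_h) with b_h : S × A → ℝ, and any Markov policy π: V_{P',r+b}^π − V_{P,r}^π = Σ_{h=0}^{H−1} Σ_{(s,a)∈S×A} d_{P',h}^π(s,a)·[ b_h(s,a) + Σ_{s'∈S} (P'_h(s,a)(s') − P_h(s,a)(s'))·V_{P,r,h+1}^π(s') ]. -/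
open Finset

section Aux

variable {S A : Type} [Fintype S] [Fintype A]

/-- State occupancy measure. -/
noncomputable def dstate (ρ0 : FDist S) (P : ℕ → S → A → FDist S) (π : ℕ → S → FDist A) :
    ℕ → S → ℝ
  | 0 => fun s => ρ0.prob s
  | (h + 1) => fun s' => ∑ s : S, ∑ a : A, docc ρ0 P π h s a * (P h s a).prob s'

lemma docc_eq_dstate (ρ0 : FDist S) (P : ℕ → S → A → FDist S) (π : ℕ → S → FDist A)
    (h : ℕ) (s : S) (a : A) :
    docc ρ0 P π h s a = dstate ρ0 P π h s * (π h s).prob a := by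
  cases h <;> rfl

lemma Vstep_of_lt (H : ℕ) (P : ℕ → S → A → FDist S) (r : ℕ → S → A → ℝ)
    (π : ℕ → S → FDist A) {h : ℕ} (hlt : h < H) (s : S) :
    Vstep H P r π h s = ∑ a : A, (π h s).prob a *
      (r h s a + ∑ s' : S, (P h s a).prob s' * Vstep H P r π (h + 1) s') := by
  rw [Vstep.eq_def, dif_pos hlt]

lemma key (H : ℕ) (ρ0 : FDist S) (P P' : ℕ → S → A → FDist S)
    (r b : ℕ → S → A → ℝ) (π : ℕ → S → FDist A) :
    ∀ n h, h + n = H →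
    ∑ s : S, dstate ρ0 P' π h s *
        (Vstep H P' (fun h s a => r h s a + b h s a) π h s - Vstep H P r π h s) =
      ∑ k ∈ Finset.Ico h H, ∑ s : S, ∑ a : A,
        docc ρ0 P' π k s a *
          (b k s a +
            ∑ s' : S, ((P' k s a).prob s' - (P k s a).prob s') *
              Vstep H P r π (k + 1) s') := by
  intro n
  induction n with
  | zero =>
      intro h hh
      subst hh
      simp only [Nat.add_zero]
      rw [Finset.Ico_self, Finset.sum_empty]
      apply Finset.sum_eq_zero
      intro s _
      rw [Vstep.eq_def, dif_neg (lt_irrefl _), Vstep.eq_def, dif_neg (lt_irrefl _)]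
      simp
  | succ n ih =>
      intro h hh
      have hlt : h < H := by omega
      have ih' := ih (h + 1) (by omega)
      rw [Finset.sum_eq_sum_Ico_succ_bot hlt, ← ih']
      set W : S → ℝ := fun s' =>
        Vstep H P' (fun h s a => r h s a + b h s a) π (h + 1) s' - Vstep H P r π (h + 1) s'
        with hW
      -- expand Vstep at level h
      have expand : ∀ s : S,
          Vstep H P' (fun h s a => r h s a + b h s a) π h s - Vstep H P r π h s =
          (∑ a : A, (π h s).prob a *
              (b h s a + ∑ s' : S, ((P' h s a).prob s' - (P h s a).prob s') *
                Vstep H P r π (h + 1) s')) +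
          ∑ a : A, (π h s).prob a * ∑ s' : S, (P' h s a).prob s' * W s' := by
        intro s
        rw [Vstep_of_lt H P' _ π hlt, Vstep_of_lt H P r π hlt]
        rw [← Finset.sum_add_distrib, ← Finset.sum_sub_distrib]
        apply Finset.sum_congr rfl
        intro a _
        rw [← mul_add, ← mul_sub]
        congr 1
        simp only [hW, sub_mul, mul_sub, Finset.sum_sub_distrib]
        ring
      have step1 : ∑ s : S, dstate ρ0 P' π h s *
              (Vstep H P' (fun h s a => r h s a + b h s a) π h s - Vstep H P r π h s)
          = (∑ s : S, dstate ρ0 P' π h s * ∑ a : A, (π h s).prob a *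
              (b h s a + ∑ s' : S, ((P' h s a).prob s' - (P h s a).prob s') *
                Vstep H P r π (h + 1) s')) +
            ∑ s : S, dstate ρ0 P' π h s * ∑ a : A, (π h s).prob a *
              ∑ s' : S, (P' h s a).prob s' * W s' := by
        rw [← Finset.sum_add_distrib]
        apply Finset.sum_congr rfl
        intro s _
        rw [expand s, mul_add]
      have first : ∑ s : S, dstate ρ0 P' π h s * ∑ a : A, (π h s).prob a *
              (b h s a + ∑ s' : S, ((P' h s a).prob s' - (P h s a).prob s') *
                Vstep H P r π (h + 1) s')
          = ∑ s : S, ∑ a : A, docc ρ0 P' π h s a *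
              (b h s a + ∑ s' : S, ((P' h s a).prob s' - (P h s a).prob s') *
                Vstep H P r π (h + 1) s') := by
        apply Finset.sum_congr rfl
        intro s _
        rw [Finset.mul_sum]
        apply Finset.sum_congr rfl
        intro a _
        rw [docc_eq_dstate]
        ring
      have second : ∑ s : S, dstate ρ0 P' π h s * ∑ a : A, (π h s).prob a *
              ∑ s' : S, (P' h s a).prob s' * W s'
          = ∑ s' : S, dstate ρ0 P' π (h + 1) s' * W s' := by
        calc ∑ s : S, dstate ρ0 P' π h s * ∑ a : A, (π h s).prob a *
                ∑ s' : S, (P' h s a).prob s' * W s'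
            = ∑ s : S, ∑ a : A, ∑ s' : S,
                docc ρ0 P' π h s a * (P' h s a).prob s' * W s' := by
              apply Finset.sum_congr rfl
              intro s _
              rw [Finset.mul_sum]
              apply Finset.sum_congr rfl
              intro a _
              rw [Finset.mul_sum, Finset.mul_sum]
              apply Finset.sum_congr rfl
              intro s' _
              rw [docc_eq_dstate]
              ring
          _ = ∑ s : S, ∑ s' : S, ∑ a : A,
                docc ρ0 P' π h s a * (P' h s a).prob s' * W s' :=
              Finset.sum_congr rfl (fun s _ => Finset.sum_comm)
          _ = ∑ s' : S, ∑ s : S, ∑ a : A,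
                docc ρ0 P' π h s a * (P' h s a).prob s' * W s' :=
              Finset.sum_comm
          _ = ∑ s' : S, (∑ s : S, ∑ a : A,
                docc ρ0 P' π h s a * (P' h s a).prob s') * W s' := by
              apply Finset.sum_congr rfl
              intro s' _
              rw [Finset.sum_mul]
              apply Finset.sum_congr rfl
              intro s _
              rw [Finset.sum_mul]
          _ = _ := rfl
      rw [step1, first, second]

end Aux

/-- (Simulation lemma, second form.) For any two families of transition
kernels `P, P'`, rewards `r`, bonuses `b` and Markov policy `π`:
`V_{P',r+b}^π − V_{P,r}^π = Σ_{h<H} Σ_{s,a} d_{P',h}^π(s,a)·(b_h(s,a) +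
Σ_{s'} (P'_h(s,a)(s') − P_h(s,a)(s'))·V_{P,r,h+1}^π(s'))`. -/
theorem statement15
    {S A : Type} [Fintype S] [Fintype A] [Nonempty S] [Nonempty A]
    (H : ℕ) (hH : 1 ≤ H) (ρ0 : FDist S)
    (P P' : ℕ → S → A → FDist S)
    (r b : ℕ → S → A → ℝ)
    (π : ℕ → S → FDist A) :
    Vtot H ρ0 P' (fun h s a => r h s a + b h s a) π - Vtot H ρ0 P r π =
      ∑ h ∈ Finset.range H, ∑ s : S, ∑ a : A,
        docc ρ0 P' π h s a *
          (b h s a +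
            ∑ s' : S, ((P' h s a).prob s' - (P h s a).prob s') *
              Vstep H P r π (h + 1) s') := by
  have k := key H ρ0 P P' r b π H 0 (by omega)
  simp only [Nat.Ico_zero_eq_range] at k
  rw [← k, Vtot, Vtot, ← Finset.sum_sub_distrib]
  apply Finset.sum_congr rfl
  intro s _
  rw [← mul_sub]
  rfl
end

section
/- Let Z and Y be finite nonempty sets, M : Z → PMF(Y), λ > 0, B ≥ 0, and g : Y → ℝ with |g(y)| ≤ B for all y ∈ Y. For a probability vector φ ∈ ℝ^Z (nonnegative entries summing to 1), write P_φ(y) = Σ_{z∈Z} φ(z)·M(z)(y) and E_{P_φ}[g] = Σ_{y∈Y} P_φ(y)·g(y). Let u, φ_1, …, φ_k be probability vectors in ℝ^Z, and let Σ = Σ_{i=1}^{k} φ_i φ_i^⊤ + λ·I, a positive-definite Z×Z matrix. Then E_{P_u}[g] ≤ sqrt(u^⊤ Σ^{−1} u) · sqrt( Σ_{i=1}^{k} (E_{P_{φ_i}}[g])² + λ·B²·|Z| ). -/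
/-!
Write `h z = E_{M z}[g]`, so that `E_{P_v}[g] = v ⬝ᵥ h` for every mixing vector `v`, and
`|h z| ≤ B`. Cauchy–Schwarz in the inner product given by `Σ⁻¹`, applied to `u` and `Σ h`, gives
`(u ⬝ᵥ h)² ≤ (uᵀ Σ⁻¹ u) · (hᵀ Σ h)`, and
`hᵀ Σ h = Σ_i (φ_i ⬝ᵥ h)² + λ ‖h‖² ≤ Σ_i E_{P_{φ_i}}[g]² + λ B² |Z|`.
-/

open Finset Matrix

namespace Matrix

variable {n ι R : Type*} [Fintype n]

theorem PosSemidef.dotProduct_mulVec_sq_le {A : Matrix n n ℝ} (hA : A.PosSemidef)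
    (x y : n → ℝ) : (x ⬝ᵥ A *ᵥ y) ^ 2 ≤ (x ⬝ᵥ A *ᵥ x) * (y ⬝ᵥ A *ᵥ y) := by
  let _ := A.toSeminormedAddCommGroup hA
  let _ := A.toInnerProductSpace hA
  have inner_eq (a b : n → ℝ) : inner ℝ a b = a ⬝ᵥ A *ᵥ b := dotProduct_comm _ _
  simpa only [inner_eq, sq] using real_inner_mul_inner_self_le x y

theorem PosDef.dotProduct_sq_le [DecidableEq n] {S : Matrix n n ℝ} (hS : S.PosDef)
    (x y : n → ℝ) : (x ⬝ᵥ y) ^ 2 ≤ (x ⬝ᵥ S⁻¹ *ᵥ x) * (y ⬝ᵥ S *ᵥ y) := by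
  have cancel : S⁻¹ *ᵥ (S *ᵥ y) = y := by
    rw [mulVec_mulVec, nonsing_inv_mul _ ((isUnit_iff_isUnit_det S).mp hS.isUnit), one_mulVec]
  simpa only [cancel, dotProduct_comm (S *ᵥ y) y] using
    hS.inv.posSemidef.dotProduct_mulVec_sq_le x (S *ᵥ y)

theorem dotProduct_vecMulVec_self_mulVec [CommSemiring R] (a x : n → R) :
    x ⬝ᵥ vecMulVec a a *ᵥ x = (a ⬝ᵥ x) ^ 2 := by
  simp only [vecMulVec_mulVec, op_smul_eq_smul, dotProduct_smul, smul_eq_mul,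
    dotProduct_comm x a, sq]

def regCovariance [Fintype ι] [DecidableEq n] [CommSemiring R] (φ : ι → n → R) (lam : R) :
    Matrix n n R :=
  ∑ i, vecMulVec (φ i) (φ i) + lam • 1

variable [Fintype ι] [DecidableEq n]

theorem dotProduct_regCovariance_mulVec [CommSemiring R] (φ : ι → n → R) (lam : R)
    (x : n → R) :
    x ⬝ᵥ regCovariance φ lam *ᵥ x = ∑ i, (φ i ⬝ᵥ x) ^ 2 + lam * (x ⬝ᵥ x) := by
  simp only [regCovariance, add_mulVec, sum_mulVec, smul_mulVec, one_mulVec, dotProduct_add,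
    dotProduct_sum, dotProduct_smul, smul_eq_mul, dotProduct_vecMulVec_self_mulVec]

theorem posDef_regCovariance (φ : ι → n → ℝ) {lam : ℝ} (hlam : 0 < lam) :
    (regCovariance φ lam).PosDef := by
  refine PosDef.posSemidef_add (posSemidef_sum _ fun i _ => ?_) (PosDef.one.smul hlam)
  simpa only [star_trivial] using posSemidef_vecMulVec_self_star (φ i)

end Matrix

theorem abs_mulVec_le_of_rowStochastic {m n : Type*} [Fintype n] {A : Matrix m n ℝ}
    (hA0 : ∀ i j, 0 ≤ A i j) (hA1 : ∀ i, ∑ j, A i j = 1) {g : n → ℝ} {B : ℝ}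
    (hg : ∀ j, |g j| ≤ B) (i : m) : |(A *ᵥ g) i| ≤ B :=
  calc |(A *ᵥ g) i| ≤ ∑ j, |A i j * g j| := abs_sum_le_sum_abs _ _
    _ ≤ ∑ j, A i j * B := by
      gcongr with j
      rw [abs_mul, abs_of_nonneg (hA0 i j)]
      exact mul_le_mul_of_nonneg_left (hg j) (hA0 i j)
    _ = B := by rw [← sum_mul, hA1, one_mul]

theorem dotProduct_self_le_card_mul_sq {n : Type*} [Fintype n] {h : n → ℝ} {B : ℝ}
    (hh : ∀ i, |h i| ≤ B) : h ⬝ᵥ h ≤ Fintype.card n * B ^ 2 :=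
  calc h ⬝ᵥ h = ∑ i, h i ^ 2 := by simp only [dotProduct, sq]
    _ ≤ ∑ _i : n, B ^ 2 :=
      sum_le_sum fun i _ => sq_le_sq' (neg_le_of_abs_le (hh i)) (le_of_abs_le (hh i))
    _ = Fintype.card n * B ^ 2 := by rw [sum_const, card_univ, nsmul_eq_mul]

theorem statement16_general
    {Z Y : Type} [Fintype Z] [Fintype Y] [DecidableEq Z]
    (M : Z → Y → ℝ) (hM0 : ∀ z y, 0 ≤ M z y) (hM1 : ∀ z, ∑ y : Y, M z y = 1)
    (lam : ℝ) (hlam : 0 < lam) (B : ℝ)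
    (g : Y → ℝ) (hg : ∀ y, |g y| ≤ B)
    (k : ℕ)
    (u : Z → ℝ)
    (φ : Fin k → Z → ℝ) :
    (∑ y : Y, (∑ z : Z, u z * M z y) * g y) ≤
      Real.sqrt (u ⬝ᵥ
          (((∑ i : Fin k, Matrix.of fun z z' => φ i z * φ i z') +
              lam • (1 : Matrix Z Z ℝ))⁻¹ *ᵥ u)) *
        Real.sqrt ((∑ i : Fin k, (∑ y : Y, (∑ z : Z, φ i z * M z y) * g y) ^ 2) +
          lam * B ^ 2 * Fintype.card Z) := by
  set h := of M *ᵥ g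
  have expectation_eq (v : Z → ℝ) : ∑ y, (∑ z, v z * M z y) * g y = v ⬝ᵥ h :=
    (dotProduct_mulVec v (of M) g).symm
  have hS := posDef_regCovariance φ hlam
  have quad_le : h ⬝ᵥ regCovariance φ lam *ᵥ h ≤
      ∑ i, (φ i ⬝ᵥ h) ^ 2 + lam * B ^ 2 * Fintype.card Z := by
    have hh : ∀ z, |h z| ≤ B := abs_mulVec_le_of_rowStochastic (A := of M) hM0 hM1 hg
    rw [dotProduct_regCovariance_mulVec]
    nlinarith [dotProduct_self_le_card_mul_sq hh]
  have inv_nonneg : 0 ≤ u ⬝ᵥ (regCovariance φ lam)⁻¹ *ᵥ u := by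
    simpa only [star_trivial] using hS.inv.posSemidef.dotProduct_mulVec_nonneg u
  have sq_le := (hS.dotProduct_sq_le u h).trans (mul_le_mul_of_nonneg_left quad_le inv_nonneg)
  change _ ≤ √(u ⬝ᵥ (regCovariance φ lam)⁻¹ *ᵥ u) * _
  simp only [expectation_eq]
  exact (le_abs_self _).trans ((Real.abs_le_sqrt sq_le).trans_eq (Real.sqrt_mul inv_nonneg _))

/-- (Finite-dimensional core of the `L`-step back inequality.) For a
kernel `M : Z → PMF(Y)`, a function `g` bounded by `B`, probability vectors
`u, φ_1, …, φ_k` on `Z`, `λ > 0` and the covariance matrix `Σ = Σ_i φ_i φ_iᵀ + λI`: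
`E_{P_u}[g] ≤ √(uᵀ Σ⁻¹ u) · √(Σ_i (E_{P_{φ_i}}[g])² + λ·B²·|Z|)`, where
`P_φ(y) = Σ_z φ(z)·M(z)(y)`. -/
theorem statement16
    {Z Y : Type} [Fintype Z] [Fintype Y] [Nonempty Z] [Nonempty Y] [DecidableEq Z]
    (M : Z → Y → ℝ) (hM0 : ∀ z y, 0 ≤ M z y) (hM1 : ∀ z, ∑ y : Y, M z y = 1)
    (lam : ℝ) (hlam : 0 < lam) (B : ℝ) (hB : 0 ≤ B)
    (g : Y → ℝ) (hg : ∀ y, |g y| ≤ B)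
    (k : ℕ)
    (u : Z → ℝ) (hu0 : ∀ z, 0 ≤ u z) (hu1 : ∑ z : Z, u z = 1)
    (φ : Fin k → Z → ℝ) (hφ0 : ∀ i z, 0 ≤ φ i z) (hφ1 : ∀ i, ∑ z : Z, φ i z = 1) :
    (∑ y : Y, (∑ z : Z, u z * M z y) * g y) ≤
      Real.sqrt (u ⬝ᵥ
          (((∑ i : Fin k, Matrix.of fun z z' => φ i z * φ i z') +
              lam • (1 : Matrix Z Z ℝ))⁻¹ *ᵥ u)) *
        Real.sqrt ((∑ i : Fin k, (∑ y : Y, (∑ z : Z, φ i z * M z y) * g y) ^ 2) +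
          lam * B ^ 2 * Fintype.card Z) :=
  statement16_general M hM0 hM1 lam hlam B g hg k u φ
end
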